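/- The kernel of the linearized operator L in H^1(ℝ) is spanned by Q': that is, L(Q') = 0, and every f ∈ H^1(ℝ) (twice differentiable) satisfying −f'' + f − 5 Q^4 f = 0 on ℝ is a scalar multiple of Q'. -/

import Mathlib

open MeasureTheory Real Filter

noncomputable section

/-- The ground state `Q(x) = 3^{1/4} (cosh 2x)^{-1/2}`, the unique positive even
`H¹` solution of `Q'' - Q + Q⁵ = 0`. -/
def Q (x : ℝ) : ℝ := (3 : ℝ) ^ ((1 : ℝ)/4) * Real.cosh (2*x) ^ (-(1:ℝ)/2)

/-- The square of the `H¹(ℝ)` norm, `‖f‖_{H¹}² = ∫ (f² + (f')²)`. -/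
def H1normSq (f : ℝ → ℝ) : ℝ := ∫ x, ((f x)^2 + (deriv f x)^2)

/-- Membership in `H¹(ℝ)` (modeled via `L²` membership of `f` and of its derivative). -/
def inH1 (f : ℝ → ℝ) : Prop := MemLp f 2 volume ∧ MemLp (deriv f) 2 volume

/-- The linearized operator around `Q`: `Lf = -f'' + f - 5 Q⁴ f`. -/
def Lop (f : ℝ → ℝ) (x : ℝ) : ℝ := -(deriv (deriv f) x) + f x - 5 * (Q x)^4 * f x

/-- The generator of the scaling symmetry: `Λf = (1/2) f + y f'`. -/
def Lam (f : ℝ → ℝ) (y : ℝ) : ℝ := (1/2) * f y + y * deriv f y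

/-- The higher-order remainder `R(ε) = 10 Q³ ε² + 10 Q² ε³ + 5 Q ε⁴ + ε⁵`. -/
def Rrem (f : ℝ → ℝ) (y : ℝ) : ℝ :=
  10 * (Q y)^3 * (f y)^2 + 10 * (Q y)^2 * (f y)^3 + 5 * Q y * (f y)^4 + (f y)^5

/-!
Differentiating the ground-state equation `Q'' = Q - Q⁵` gives `L Q' = 0`, i.e. `Q'` solves
`u'' = (1 - 5 Q⁴) u`. For any other solution `f`, the Wronskian `f Q'' - f' Q'` is constant, and
it is integrable because `f, f', Q', Q''` are all in `L²`; so it vanishes. Evaluated at `0`, where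
`Q'(0) = 0 ≠ Q''(0)`, this gives `f(0) = 0`. Hence `f` and `(f'(0) / Q''(0)) Q'` have the same
Cauchy data at `0`, and uniqueness for the linear equation (whose coefficient is bounded) makes
them equal.
-/

section SecondOrderLinear

variable {p u u' w w' : ℝ → ℝ}

theorem eq_of_hasDerivAt_second_order_linear {C : ℝ} (hp : ∀ t, |p t| ≤ C)
    (hu : ∀ t, HasDerivAt u (u' t) t) (hu' : ∀ t, HasDerivAt u' (p t * u t) t)
    (hw : ∀ t, HasDerivAt w (w' t) t) (hw' : ∀ t, HasDerivAt w' (p t * w t) t)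
    {t₀ : ℝ} (h₀ : u t₀ = w t₀) (h₀' : u' t₀ = w' t₀) : u = w := by
  have hv (t : ℝ) : LipschitzWith (max 1 C.toNNReal) fun z : ℝ × ℝ => (z.2, p t * z.1) := by
    have hpt : ‖p t‖₊ ≤ C.toNNReal := by
      rw [← NNReal.coe_le_coe, coe_nnnorm, Real.norm_eq_abs, Real.coe_toNNReal']
      exact le_max_of_le_left (hp t)
    exact (LipschitzWith.prod_snd.prodMk
      (((lipschitzWith_smul (p t)).weaken hpt).comp LipschitzWith.prod_fst)).weaken (by simp)
  have hpair := ODE_solution_unique_univ (v := fun t z => (z.2, p t * z.1)) (s := fun _ => Set.univ)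
    (f := fun t => (u t, u' t)) (g := fun t => (w t, w' t)) (t₀ := t₀)
    (fun t => (hv t).lipschitzOnWith) (fun t => ⟨(hu t).prodMk (hu' t), trivial⟩)
    (fun t => ⟨(hw t).prodMk (hw' t), trivial⟩) (by simp [h₀, h₀'])
  exact funext fun t => congrArg Prod.fst (congrFun hpair t)

theorem hasDerivAt_wronskian {t : ℝ} (hu : HasDerivAt u (u' t) t)
    (hu' : HasDerivAt u' (p t * u t) t) (hw : HasDerivAt w (w' t) t)
    (hw' : HasDerivAt w' (p t * w t) t) :
    HasDerivAt (fun s => u s * w' s - u' s * w s) 0 t :=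
  ((hu.mul hw').sub (hu'.mul hw)).congr_deriv (by ring)

theorem wronskian_eq_zero_of_memLp (hu : ∀ t, HasDerivAt u (u' t) t)
    (hu' : ∀ t, HasDerivAt u' (p t * u t) t) (hw : ∀ t, HasDerivAt w (w' t) t)
    (hw' : ∀ t, HasDerivAt w' (p t * w t) t) (hu₂ : MemLp u 2) (hu'₂ : MemLp u' 2)
    (hw₂ : MemLp w 2) (hw'₂ : MemLp w' 2) (t : ℝ) : u t * w' t - u' t * w t = 0 := by
  have hW (s : ℝ) := hasDerivAt_wronskian (hu s) (hu' s) (hw s) (hw' s)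
  have hconst (s : ℝ) : u s * w' s - u' s * w s = u t * w' t - u' t * w t :=
    is_const_of_deriv_eq_zero (fun s => (hW s).differentiableAt) (fun s => (hW s).deriv) s t
  have hint : Integrable fun _ : ℝ => u t * w' t - u' t * w t :=
    ((hu₂.integrable_mul hw'₂).sub (hu'₂.integrable_mul hw₂)).congr (ae_of_all _ hconst)
  exact (integrable_const_iff.1 hint).resolve_right (not_isFiniteMeasure_iff.2 Real.volume_univ)

end SecondOrderLinear

theorem one_add_sq_le_cosh_two_mul (x : ℝ) : 1 + x ^ 2 ≤ cosh (2 * x) := by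
  have h : x ^ 2 ≤ sinh x ^ 2 := by
    rw [sq_le_sq, abs_sinh]
    exact self_le_sinh_iff.2 (abs_nonneg x)
  nlinarith [cosh_two_mul x, cosh_sq' x]

section GroundState

local notation "κ" => (3 : ℝ) ^ ((1 : ℝ) / 4)

def ρ (x : ℝ) : ℝ := cosh (2 * x) ^ (-(1 : ℝ) / 2)

def Q' (x : ℝ) : ℝ := -κ * sinh (2 * x) * ρ x ^ 3

def Q'' (x : ℝ) : ℝ := Q x - Q x ^ 5

theorem κ_pos : 0 < κ := by positivity

theorem κ_pow_four : κ ^ 4 = 3 := by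
  rw [← Real.rpow_natCast, ← Real.rpow_mul (by norm_num)]
  norm_num

theorem ρ_pos (x : ℝ) : 0 < ρ x := Real.rpow_pos_of_pos (cosh_pos _) _

theorem ρ_le_one (x : ℝ) : ρ x ≤ 1 :=
  Real.rpow_le_one_of_one_le_of_nonpos (one_le_cosh _) (by norm_num)

theorem ρ_sq_mul_cosh (x : ℝ) : ρ x ^ 2 * cosh (2 * x) = 1 := by
  rw [ρ, ← Real.rpow_natCast, ← Real.rpow_mul (cosh_pos _).le]
  norm_num [Real.rpow_neg_one, inv_mul_cancel₀ (cosh_pos (2 * x)).ne']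

theorem hasDerivAt_ρ (x : ℝ) : HasDerivAt ρ (-sinh (2 * x) * ρ x ^ 3) x := by
  have h := (((hasDerivAt_id' x).const_mul 2).cosh).rpow_const (p := -(1 : ℝ) / 2)
    (Or.inl (cosh_pos _).ne')
  have hpow : cosh (2 * x) ^ (-(1 : ℝ) / 2 - 1) = ρ x ^ 3 := by
    rw [ρ, ← Real.rpow_natCast, ← Real.rpow_mul (cosh_pos _).le]
    norm_num
  refine h.congr_deriv ?_
  rw [hpow]
  ring

theorem Q_eq_mul_ρ (x : ℝ) : Q x = κ * ρ x := rfl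

theorem Q_pos (x : ℝ) : 0 < Q x := mul_pos κ_pos (ρ_pos x)

theorem Q_pow_four_le (x : ℝ) : Q x ^ 4 ≤ 3 := by
  rw [Q_eq_mul_ρ, mul_pow, κ_pow_four]
  nlinarith [pow_le_one₀ (ρ_pos x).le (ρ_le_one x) (n := 4)]

theorem hasDerivAt_Q (x : ℝ) : HasDerivAt Q (Q' x) x :=
  ((hasDerivAt_ρ x).const_mul κ).congr_deriv (by rw [Q']; ring)

theorem hasDerivAt_Q' (x : ℝ) : HasDerivAt Q' (Q'' x) x := by
  have h := (((hasDerivAt_id' x).const_mul 2).sinh.const_mul (-κ)).mul ((hasDerivAt_ρ x).pow 3)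
  refine h.congr_deriv ?_
  have hs : sinh (2 * x) ^ 2 = cosh (2 * x) ^ 2 - 1 := sinh_sq _
  simp only [Pi.pow_apply, Q'', Q_eq_mul_ρ]
  push_cast
  linear_combination (3 * κ * ρ x ^ 5) * hs + (κ * ρ x ^ 5) * κ_pow_four
    + (κ * ρ x * (3 * cosh (2 * x) * ρ x ^ 2 + 1)) * ρ_sq_mul_cosh x

theorem hasDerivAt_Q'' (x : ℝ) : HasDerivAt Q'' ((1 - 5 * Q x ^ 4) * Q' x) x :=
  ((hasDerivAt_Q x).sub ((hasDerivAt_Q x).pow 5)).congr_deriv (by push_cast; ring)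

theorem deriv_Q : deriv Q = Q' := funext fun x => (hasDerivAt_Q x).deriv

theorem deriv_Q' : deriv Q' = Q'' := funext fun x => (hasDerivAt_Q' x).deriv

theorem Lop_deriv_Q (x : ℝ) : Lop (deriv Q) x = 0 := by
  rw [Lop, deriv_Q, deriv_Q', (hasDerivAt_Q'' x).deriv]
  ring

theorem Q'_zero : Q' 0 = 0 := by simp [Q']

theorem Q''_zero_ne_zero : Q'' 0 ≠ 0 := by
  have hQ0 : Q 0 = κ := by simp [Q_eq_mul_ρ, ρ]
  rw [Q'', hQ0, pow_succ, κ_pow_four]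
  nlinarith [κ_pos]

theorem memLp_Q : MemLp Q 2 := by
  have hQ : Continuous Q := continuous_iff_continuousAt.2 fun x => (hasDerivAt_Q x).continuousAt
  rw [memLp_two_iff_integrable_sq hQ.aestronglyMeasurable]
  refine (integrable_inv_one_add_sq.const_mul 2).mono' (hQ.pow 2).aestronglyMeasurable
    (ae_of_all _ fun x => ?_)
  have hκ : κ ^ 2 ≤ 2 := by nlinarith [κ_pow_four, sq_nonneg (κ ^ 2)]
  have hρ : ρ x ^ 2 ≤ (1 + x ^ 2)⁻¹ := by
    rw [eq_inv_of_mul_eq_one_left (ρ_sq_mul_cosh x)]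
    exact inv_anti₀ (by positivity) (one_add_sq_le_cosh_two_mul x)
  rw [Real.norm_of_nonneg (sq_nonneg _), Q_eq_mul_ρ, mul_pow]
  exact mul_le_mul hκ hρ (sq_nonneg _) zero_le_two

theorem abs_Q'_le (x : ℝ) : |Q' x| ≤ Q x := by
  have hs : |sinh (2 * x)| ≤ cosh (2 * x) := by
    rw [abs_sinh, ← cosh_abs (2 * x)]
    exact (sinh_lt_cosh _).le
  rw [Q', abs_mul, abs_mul, abs_neg, abs_of_pos κ_pos, abs_of_pos (pow_pos (ρ_pos x) 3)]
  calc κ * |sinh (2 * x)| * ρ x ^ 3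
      ≤ κ * cosh (2 * x) * ρ x ^ 3 := by gcongr; exact (pow_pos (ρ_pos x) 3).le
    _ = Q x * (ρ x ^ 2 * cosh (2 * x)) := by rw [Q_eq_mul_ρ]; ring
    _ = Q x := by rw [ρ_sq_mul_cosh, mul_one]

theorem abs_Q''_le (x : ℝ) : |Q'' x| ≤ 2 * Q x := by
  rw [Q'', abs_le]
  constructor <;> nlinarith [Q_pos x, Q_pow_four_le x, pow_pos (Q_pos x) 4]

theorem memLp_Q' : MemLp Q' 2 :=
  memLp_Q.of_le_mul (c := 1)
    (continuous_iff_continuousAt.2 fun x => (hasDerivAt_Q' x).continuousAt).aestronglyMeasurable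
    (ae_of_all _ fun x => by simpa [abs_of_pos (Q_pos x)] using abs_Q'_le x)

theorem memLp_Q'' : MemLp Q'' 2 :=
  memLp_Q.of_le_mul (c := 2)
    (continuous_iff_continuousAt.2 fun x => (hasDerivAt_Q'' x).continuousAt).aestronglyMeasurable
    (ae_of_all _ fun x => by simpa [abs_of_pos (Q_pos x)] using abs_Q''_le x)

theorem abs_one_sub_five_mul_Q_pow_four_le (x : ℝ) : |1 - 5 * Q x ^ 4| ≤ 14 := by
  rw [abs_le]
  constructor <;> nlinarith [Q_pow_four_le x, pow_pos (Q_pos x) 4]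

end GroundState

/-- **The kernel of `L` in `H¹(ℝ)` is spanned by `Q'`:** `L(Q') = 0`, and every twice
differentiable `f ∈ H¹(ℝ)` with `-f'' + f - 5Q⁴ f = 0` on `ℝ` is a scalar multiple
of `Q'`. -/
theorem kernel_of_L :
    (∀ x : ℝ, Lop (deriv Q) x = 0) ∧
    ∀ f : ℝ → ℝ, inH1 f →
      (∀ x, DifferentiableAt ℝ f x) →
      (∀ x, DifferentiableAt ℝ (deriv f) x) →
      (∀ x, -(deriv (deriv f) x) + f x - 5 * (Q x)^4 * f x = 0) →
      ∃ a : ℝ, f = fun x => a * deriv Q x := by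
  refine ⟨Lop_deriv_Q, fun f hf hdf hdf' heq => ?_⟩
  have hf₁ (t : ℝ) : HasDerivAt f (deriv f t) t := (hdf t).hasDerivAt
  have hf₂ (t : ℝ) : HasDerivAt (deriv f) ((1 - 5 * Q t ^ 4) * f t) t :=
    (hdf' t).hasDerivAt.congr_deriv (by linear_combination -heq t)
  have hf₀ : f 0 = 0 := by
    have hW := wronskian_eq_zero_of_memLp hf₁ hf₂ hasDerivAt_Q' hasDerivAt_Q''
      hf.1 hf.2 memLp_Q' memLp_Q'' 0
    rw [Q'_zero, mul_zero, sub_zero] at hW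
    exact (mul_eq_zero.1 hW).resolve_right Q''_zero_ne_zero
  set a := deriv f 0 / Q'' 0
  refine ⟨a, deriv_Q ▸ eq_of_hasDerivAt_second_order_linear abs_one_sub_five_mul_Q_pow_four_le
    hf₁ hf₂ (fun t => (hasDerivAt_Q' t).const_mul a)
    (fun t => ((hasDerivAt_Q'' t).const_mul a).congr_deriv (by ring)) (t₀ := 0)
    (by rw [hf₀, Q'_zero, mul_zero]) ?_⟩
  exact (div_mul_cancel₀ _ Q''_zero_ne_zero).symm
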